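/- arXiv:0905.2732 — 2 statements merged into one kernel-verified Lean document; each statement's English description precedes it below -/
import Mathlib

section
/- For every positive integer i and every real α ≥ i + 1, the function x ↦ (α/x) |ψ^{(i)}(x)| - |ψ^{(i+1)}(x)| is completely monotonic on (0, ∞); conversely, if this function is completely monotonic on (0, ∞), then α ≥ i + 1. -/
open Real Set MeasureTheory Filter

/-- The k-th polygamma function: the (k+1)-st derivative of log Γ. -/
noncomputable def polygamma (k : ℕ) : ℝ → ℝ :=
  iteratedDeriv (k + 1) (fun x => Real.log (Real.Gamma x))

/-- A function is completely monotonic on (0,∞). -/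
def CompletelyMonotonicOn (f : ℝ → ℝ) : Prop :=
  (∀ k : ℕ, ∀ x : ℝ, 0 < x → 0 ≤ (-1 : ℝ) ^ k * iteratedDeriv k f x)


open Real Set Filter Finset Topology

set_option maxHeartbeats 1000000

noncomputable section PGproof


/-- coefficient in the iterated derivative of `1/(x (x+n)^m)` -/
def pgc (m k j : ℕ) : ℕ := k.choose j * j.factorial * m.ascFactorial (k - j)

/-- `(-1)^k` times the k-th derivative of `1/(x (x+n)^m)`. -/
def pgH (m : ℕ) (n : ℕ) (k : ℕ) (x : ℝ) : ℝ :=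
  ∑ j ∈ Finset.range (k + 1), (pgc m k j : ℝ) / (x ^ (j + 1) * (x + n) ^ (m + k - j))

lemma pgc_zero (m : ℕ) : pgc m 0 0 = 1 := by simp [pgc]

lemma pgc_pascal (m k j : ℕ) (hj : j ≤ k) :
    pgc m (k + 1) (j + 1) = pgc m k j * (j + 1) + pgc m k (j + 1) * (m + k - (j + 1)) := by
  rcases eq_or_lt_of_le hj with rfl | hjk
  · simp [pgc, Nat.choose_succ_self, Nat.choose_self, Nat.factorial_succ, Nat.mul_comm]
  · have hj1 : j + 1 ≤ k := hjk
    have hsub : k - j = (k - (j+1)) + 1 := by omega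
    have hasc : m.ascFactorial (k - j) = (m + (k - (j+1))) * m.ascFactorial (k - (j+1)) := by
      rw [hsub]; rfl
    have hasc2 : m.ascFactorial ((k+1) - (j+1)) = m.ascFactorial (k - j) := by
      congr 1; omega
    have hmk : m + (k - (j+1)) = m + k - (j+1) := by omega
    calc pgc m (k + 1) (j + 1)
        = (k.choose j + k.choose (j+1)) * (j+1).factorial * m.ascFactorial (k - j) := by
          rw [pgc, Nat.choose_succ_succ, hasc2]
      _ = pgc m k j * (j + 1) + pgc m k (j + 1) * (m + k - (j + 1)) := by
          rw [pgc, pgc, hasc, Nat.factorial_succ, ← hmk]; ring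

lemma pgc_pascal_zero (m k : ℕ) : pgc m (k + 1) 0 = pgc m k 0 * (m + k) := by
  simp only [pgc, Nat.choose_zero_right, Nat.factorial_zero, Nat.sub_zero]
  rw [Nat.ascFactorial_succ]; ring






lemma hasDerivAt_inv_pow_shift (p : ℕ) (c : ℝ) {y : ℝ} (hy : y + c ≠ 0) :
    HasDerivAt (fun z : ℝ => ((z + c) ^ p)⁻¹) (-(p : ℝ) * (((y + c) ^ (p + 1))⁻¹)) y := by
  have h1 : HasDerivAt (fun z : ℝ => (z + c) ^ p)
      ((p : ℝ) * (y + c) ^ (p - 1) * 1) y := ((hasDerivAt_id y).add_const c).pow p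
  have h2 := h1.fun_inv (pow_ne_zero p hy)
  refine h2.congr_deriv ?_
  symm
  rcases p with _ | q
  · simp
  · have : (y + c) ^ (q + 1 + 1) ≠ 0 := pow_ne_zero _ hy
    simp only [Nat.add_sub_cancel]
    field_simp
    ring

lemma hasDerivAt_term (C : ℝ) (p q : ℕ) {x : ℝ} (c : ℝ) (hx : x ≠ 0) (hxn : x + c ≠ 0) :
    HasDerivAt (fun y : ℝ => C / (y ^ (p + 1) * (y + c) ^ q))
      (-(C * ((p + 1 : ℕ) / (x ^ (p + 2) * (x + c) ^ q)
          + (q : ℕ) / (x ^ (p + 1) * (x + c) ^ (q + 1))))) x := by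
  have h1 : HasDerivAt (fun z : ℝ => ((z + 0) ^ (p + 1))⁻¹)
      (-((p + 1 : ℕ) : ℝ) * (((x + 0) ^ (p + 2))⁻¹)) x := hasDerivAt_inv_pow_shift (p + 1) 0 (by simpa)
  simp only [add_zero] at h1
  have h2 : HasDerivAt (fun z : ℝ => ((z + c) ^ q)⁻¹)
      (-(q : ℝ) * (((x + c) ^ (q + 1))⁻¹)) x := hasDerivAt_inv_pow_shift q c hxn
  have h3 := (h1.fun_mul h2).const_mul C
  have hfun : (fun y : ℝ => C * (((y ^ (p+1))⁻¹) * (((y + c) ^ q)⁻¹)))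
      = fun y : ℝ => C / (y ^ (p + 1) * (y + c) ^ q) := by
    funext y; rw [div_eq_mul_inv, mul_inv]
  rw [hfun] at h3
  refine h3.congr_deriv ?_
  symm
  simp only [div_eq_mul_inv, mul_inv]
  push_cast
  ring

lemma pgc_top (m k : ℕ) : pgc m k (k + 1) = 0 := by
  simp [pgc, Nat.choose_succ_self]

lemma pgH_sum_eq (m n k : ℕ) (x : ℝ) :
    pgH m n (k + 1) x
      = ∑ j ∈ Finset.range (k + 1), (pgc m k j : ℝ) *
          (((j + 1 : ℕ) : ℝ) * (x ^ (j + 2) * (x + (n:ℝ)) ^ (m + k - j))⁻¹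
            + ((m + k - j : ℕ) : ℝ) * (x ^ (j + 1) * (x + (n:ℝ)) ^ (m + k - j + 1))⁻¹) := by
  set T : ℕ → ℝ := fun j => (x ^ (j + 1) * (x + (n:ℝ)) ^ (m + (k + 1) - j))⁻¹ with hT
  have E1 : pgH m n (k + 1) x = ∑ j ∈ Finset.range (k + 2), (pgc m (k+1) j : ℝ) * T j := by
    refine Finset.sum_congr rfl fun j _ => ?_
    rw [hT, div_eq_mul_inv]
  have E2 : ∀ j, j ≤ k → (x ^ (j + 2) * (x + (n:ℝ)) ^ (m + k - j))⁻¹ = T (j + 1) := by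
    intro j hj
    have h1 : m + (k + 1) - (j + 1) = m + k - j := by omega
    rw [hT]
    simp only [h1]
  have E3 : ∀ j, j ≤ k → (x ^ (j + 1) * (x + (n:ℝ)) ^ (m + k - j + 1))⁻¹ = T j := by
    intro j hj
    have h1 : m + (k + 1) - j = m + k - j + 1 := by omega
    rw [hT]
    simp only [h1]
  rw [E1, Finset.sum_range_succ' (fun j => (pgc m (k+1) j : ℝ) * T j)]
  have RHS2 : ∑ j ∈ Finset.range (k + 1), (pgc m k j : ℝ) *
          (((j + 1 : ℕ) : ℝ) * (x ^ (j + 2) * (x + (n:ℝ)) ^ (m + k - j))⁻¹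
            + ((m + k - j : ℕ) : ℝ) * (x ^ (j + 1) * (x + (n:ℝ)) ^ (m + k - j + 1))⁻¹)
      = ∑ j ∈ Finset.range (k + 1), ((pgc m k j : ℝ) * ((j + 1 : ℕ) : ℝ) * T (j + 1)
            + (pgc m k j : ℝ) * ((m + k - j : ℕ) : ℝ) * T j) := by
    refine Finset.sum_congr rfl fun j hj => ?_
    have hj' : j ≤ k := Finset.mem_range_succ_iff.mp hj
    rw [E2 j hj', E3 j hj']
    ring
  rw [RHS2, Finset.sum_add_distrib,
    Finset.sum_range_succ' (fun j => (pgc m k j : ℝ) * ((m + k - j : ℕ) : ℝ) * T j)]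
  have hz : ((pgc m k (k+1) : ℝ) * ((m + k - (k+1) : ℕ) : ℝ) * T (k + 1)) = 0 := by
    rw [pgc_top]; simp
  rw [show (∑ j ∈ Finset.range k, (pgc m k (j+1) : ℝ) * ((m + k - (j+1) : ℕ) : ℝ) * T (j + 1))
      = ∑ j ∈ Finset.range (k+1), (pgc m k (j+1) : ℝ) * ((m + k - (j+1) : ℕ) : ℝ) * T (j + 1) by
    rw [Finset.sum_range_succ, hz, add_zero]]
  rw [← add_assoc, ← Finset.sum_add_distrib]
  congr 1
  · refine Finset.sum_congr rfl fun j hj => ?_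
    have hj' : j ≤ k := Finset.mem_range_succ_iff.mp hj
    rw [pgc_pascal m k j hj']
    push_cast
    ring
  · rw [pgc_pascal_zero]
    simp only [Nat.sub_zero]
    push_cast
    ring

lemma pgH_hasDerivAt (m n k : ℕ) {x : ℝ} (hx : 0 < x) :
    HasDerivAt (fun y => pgH m n k y) (-pgH m n (k + 1) x) x := by
  have hx0 : x ≠ 0 := ne_of_gt hx
  have hxn : x + (n : ℝ) ≠ 0 := by positivity
  have H : ∀ j ∈ Finset.range (k + 1),
      HasDerivAt (fun y : ℝ => (pgc m k j : ℝ) / (y ^ (j + 1) * (y + (n : ℝ)) ^ (m + k - j)))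
        (-((pgc m k j : ℝ) * ((j + 1 : ℕ) / (x ^ (j + 2) * (x + n) ^ (m + k - j))
          + ((m + k - j : ℕ) : ℝ) / (x ^ (j + 1) * (x + n) ^ (m + k - j + 1))))) x := by
    intro j _
    exact hasDerivAt_term _ j (m + k - j) (n : ℝ) hx0 hxn
  have hsum := HasDerivAt.fun_sum H
  have hfun : (fun y : ℝ => ∑ j ∈ Finset.range (k + 1),
      (pgc m k j : ℝ) / (y ^ (j + 1) * (y + (n : ℝ)) ^ (m + k - j))) = fun y => pgH m n k y := rfl
  rw [hfun] at hsum
  refine hsum.congr_deriv ?_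
  symm
  rw [pgH_sum_eq m n k x, ← Finset.sum_neg_distrib]
  refine Finset.sum_congr rfl fun j _ => ?_
  simp only [div_eq_mul_inv]
lemma pgH_nonneg (m n k : ℕ) {x : ℝ} (hx : 0 < x) : 0 ≤ pgH m n k x := by
  refine Finset.sum_nonneg fun j _ => ?_
  have h1 : (0:ℝ) < x ^ (j+1) * (x + n) ^ (m + k - j) := by positivity
  positivity

lemma pgH_le (m k r : ℕ) (hrm : r ≤ m) (n : ℕ) {e x : ℝ} (he : 0 < e) (he1 : e ≤ 1)
    (hex : e ≤ x) :
    pgH m n k x ≤ (∑ j ∈ Finset.range (k+1), (pgc m k j : ℝ)) / e ^ (m + k + 1) / ((n:ℝ) + 1) ^ r := by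
  have hx : 0 < x := lt_of_lt_of_le he hex
  have hn1 : (0:ℝ) < (n:ℝ) + 1 := by positivity
  have key : ∀ j, j ≤ k → e ^ (m + k + 1) * ((n:ℝ) + 1) ^ r ≤ x ^ (j+1) * (x + n) ^ (m + k - j) := by
    intro j hj
    have h1 : e ^ (j+1) ≤ x ^ (j+1) := pow_le_pow_left₀ he.le hex _
    have h2 : e * ((n:ℝ) + 1) ≤ x + n := by
      have : e * (n:ℝ) ≤ n := by
        have := Nat.cast_nonneg (α := ℝ) n
        nlinarith
      nlinarith
    have h3 : (e * ((n:ℝ)+1)) ^ (m + k - j) ≤ (x + n) ^ (m + k - j) :=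
      pow_le_pow_left₀ (by positivity) h2 _
    have h4 : ((n:ℝ)+1) ^ r ≤ ((n:ℝ)+1) ^ (m + k - j) :=
      pow_le_pow_right₀ (by linarith) (by omega)
    have h5 : e ^ (m + k - j) * ((n:ℝ)+1) ^ r ≤ (x + n) ^ (m + k - j) := by
      calc e ^ (m + k - j) * ((n:ℝ)+1) ^ r ≤ e ^ (m + k - j) * ((n:ℝ)+1) ^ (m + k - j) := by
            have : (0:ℝ) ≤ e ^ (m+k-j) := by positivity
            exact mul_le_mul_of_nonneg_left h4 this
        _ = (e * ((n:ℝ)+1)) ^ (m + k - j) := (mul_pow _ _ _).symm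
        _ ≤ (x + n) ^ (m + k - j) := h3
    calc e ^ (m + k + 1) * ((n:ℝ) + 1) ^ r
        = e ^ (j+1) * (e ^ (m + k - j) * ((n:ℝ)+1) ^ r) := by
          rw [← mul_assoc, ← pow_add]
          congr 2
          omega
      _ ≤ x ^ (j+1) * (x + n) ^ (m + k - j) := by
          have h0 : (0:ℝ) ≤ e ^ (m+k-j) * ((n:ℝ)+1)^r := by positivity
          have := mul_le_mul h1 h5 h0 (by positivity)
          linarith
  have hE : (0:ℝ) < e ^ (m + k + 1) * ((n:ℝ) + 1) ^ r := by positivity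
  calc pgH m n k x ≤ ∑ j ∈ Finset.range (k+1), (pgc m k j : ℝ) / (e ^ (m + k + 1) * ((n:ℝ) + 1) ^ r) := by
        refine Finset.sum_le_sum fun j hj => ?_
        have hj' : j ≤ k := Finset.mem_range_succ_iff.mp hj
        exact div_le_div_of_nonneg_left (by positivity) hE (key j hj')
    _ = (∑ j ∈ Finset.range (k+1), (pgc m k j : ℝ)) / e ^ (m + k + 1) / ((n:ℝ) + 1) ^ r := by
        rw [← Finset.sum_div, div_div]

lemma summable_inv_sq : Summable (fun n : ℕ => (((n:ℝ)+1)^2)⁻¹) := by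
  have h : Summable (fun n : ℕ => 1 / (n:ℝ) ^ 2) := summable_one_div_nat_pow.mpr one_lt_two
  have h2 := (summable_nat_add_iff 1).mpr h
  refine h2.congr fun n => ?_
  push_cast
  rw [one_div]

lemma summable_pgH (m k r : ℕ) (h2r : 2 ≤ r) (hrm : r ≤ m) (w : ℕ → ℝ)
    (hw0 : ∀ n, 0 ≤ w n) (hwb : ∀ n : ℕ, w n ≤ ((n:ℝ)+1)^(r-2)) {x : ℝ} (hx : 0 < x) :
    Summable (fun n : ℕ => w n * pgH m n k x) := by
  set e : ℝ := min x 1 with he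
  have he0 : 0 < e := lt_min hx one_pos
  have he1 : e ≤ 1 := min_le_right _ _
  have hex : e ≤ x := min_le_left _ _
  set C : ℝ := (∑ j ∈ Finset.range (k+1), (pgc m k j : ℝ)) / e ^ (m + k + 1) with hC
  refine Summable.of_nonneg_of_le (fun n => mul_nonneg (hw0 n) (pgH_nonneg m n k hx))
    (fun n => ?_) (summable_inv_sq.mul_left C)
  have hb := pgH_le m k r hrm n he0 he1 hex
  have hn1 : (0:ℝ) < (n:ℝ) + 1 := by positivity
  calc w n * pgH m n k x ≤ ((n:ℝ)+1)^(r-2) * (C / ((n:ℝ) + 1) ^ r) := by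
        exact mul_le_mul (hwb n) hb (pgH_nonneg m n k hx) (by positivity)
    _ = C * (((n:ℝ)+1)^2)⁻¹ := by
        rw [show r = (r-2)+2 by omega, pow_add]
        field_simp
        ring_nf
        rw [show 2 + (r - 2) - 2 = r - 2 by omega]

lemma hasDerivAt_tsum_pgH (m k r : ℕ) (h2r : 2 ≤ r) (hrm : r ≤ m) (w : ℕ → ℝ)
    (hw0 : ∀ n, 0 ≤ w n) (hwb : ∀ n : ℕ, w n ≤ ((n:ℝ)+1)^(r-2)) {x : ℝ} (hx : 0 < x) :
    HasDerivAt (fun y => ∑' n : ℕ, w n * pgH m n k y) (-∑' n : ℕ, w n * pgH m n (k+1) x) x := by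
  set e : ℝ := min (x/2) 1 with he
  have he0 : 0 < e := lt_min (by linarith) one_pos
  have he1 : e ≤ 1 := min_le_right _ _
  set C : ℝ := (∑ j ∈ Finset.range (k+2), (pgc m (k+1) j : ℝ)) / e ^ (m + (k+1) + 1) with hC
  have hu : Summable (fun n : ℕ => C * (((n:ℝ)+1)^2)⁻¹) := summable_inv_sq.mul_left C
  have key := hasDerivAt_tsum_of_isPreconnected hu isOpen_Ioo
      (isPreconnected_Ioo (a := x/2) (b := x+1))
      (g := fun (n : ℕ) y => w n * pgH m n k y) (g' := fun (n : ℕ) y => w n * -pgH m n (k+1) y)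
      (u := fun (n : ℕ) => C * (((n:ℝ)+1)^2)⁻¹) (y₀ := x) (y := x) ?_ ?_ ?_ ?_ ?_
  · have : (∑' n : ℕ, w n * -pgH m n (k+1) x) = -∑' n : ℕ, w n * pgH m n (k+1) x := by
      rw [← tsum_neg]
      exact tsum_congr fun n => by ring
    rwa [this] at key
  · intro n y hy
    have hy0 : 0 < y := lt_trans (by linarith [hy.1]) hy.1
    exact (pgH_hasDerivAt m n k hy0).const_mul (w n)
  · intro n y hy
    have hy0 : 0 < y := lt_trans (by linarith [hy.1]) hy.1
    have hey : e ≤ y := le_trans (min_le_left _ _) hy.1.le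
    have hb := pgH_le m (k+1) r hrm n he0 he1 hey
    have hn1 : (0:ℝ) < (n:ℝ) + 1 := by positivity
    have habs : ‖w n * -pgH m n (k+1) y‖ = w n * pgH m n (k+1) y := by
      rw [Real.norm_eq_abs, mul_neg, abs_neg, abs_mul, abs_of_nonneg (hw0 n),
        abs_of_nonneg (pgH_nonneg m n (k+1) hy0)]
    rw [habs]
    calc w n * pgH m n (k+1) y ≤ ((n:ℝ)+1)^(r-2) * (C / ((n:ℝ)+1)^r) :=
          mul_le_mul (hwb n) hb (pgH_nonneg m n (k+1) hy0) (by positivity)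
      _ = C * (((n:ℝ)+1)^2)⁻¹ := by
          rw [show r = (r-2)+2 by omega, pow_add]
          field_simp
          ring_nf
          rw [show 2 + (r - 2) - 2 = r - 2 by omega]
  · exact ⟨by linarith, by linarith⟩
  · exact summable_pgH m k r h2r hrm w hw0 hwb hx
  · exact ⟨by linarith, by linarith⟩

/-- the Hurwitz-zeta style sum: `∑ 1/(x+n)^m` -/
def pgP (m : ℕ) (x : ℝ) : ℝ := ∑' n : ℕ, ((x + n) ^ m)⁻¹

lemma aux_lb (m r : ℕ) (hrm : r ≤ m) {e x : ℝ} (he : 0 < e) (he1 : e ≤ 1) (hex : e ≤ x)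
    (n : ℕ) : e ^ m * ((n:ℝ) + 1) ^ r ≤ (x + n) ^ m := by
  have h2 : e * ((n:ℝ) + 1) ≤ x + n := by
    have : e * (n:ℝ) ≤ n := by
      have := Nat.cast_nonneg (α := ℝ) n
      nlinarith
    nlinarith
  have h3 : (e * ((n:ℝ)+1)) ^ m ≤ (x + n) ^ m := pow_le_pow_left₀ (by positivity) h2 _
  have h4 : ((n:ℝ)+1) ^ r ≤ ((n:ℝ)+1) ^ m := pow_le_pow_right₀ (by simp) hrm
  calc e ^ m * ((n:ℝ) + 1) ^ r ≤ e ^ m * ((n:ℝ)+1) ^ m := by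
        have : (0:ℝ) ≤ e ^ m := by positivity
        exact mul_le_mul_of_nonneg_left h4 this
    _ = (e * ((n:ℝ)+1)) ^ m := (mul_pow _ _ _).symm
    _ ≤ (x + n) ^ m := h3

lemma inv_pow_le (m : ℕ) (hm : 2 ≤ m) {e x : ℝ} (he : 0 < e) (he1 : e ≤ 1) (hex : e ≤ x)
    (n : ℕ) : ((x + n) ^ m)⁻¹ ≤ (e ^ m)⁻¹ * (((n:ℝ) + 1) ^ 2)⁻¹ := by
  have h := aux_lb m 2 hm he he1 hex n
  have hpos : (0:ℝ) < e ^ m * ((n:ℝ) + 1) ^ 2 := by positivity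
  have := one_div_le_one_div_of_le hpos h
  rw [one_div, one_div, mul_inv] at this
  exact this

lemma summable_pgP (m : ℕ) (hm : 2 ≤ m) {x : ℝ} (hx : 0 < x) :
    Summable (fun n : ℕ => ((x + n) ^ m)⁻¹) := by
  set e : ℝ := min x 1 with he
  have he0 : 0 < e := lt_min hx one_pos
  refine Summable.of_nonneg_of_le (fun n => by positivity)
    (fun n => inv_pow_le m hm he0 (min_le_right _ _) (min_le_left _ _) n)
    (summable_inv_sq.mul_left _)

lemma pgP_pos (m : ℕ) (hm : 2 ≤ m) {x : ℝ} (hx : 0 < x) : 0 < pgP m x := by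
  have hs := summable_pgP m hm hx
  have h0 : (0:ℝ) < ((x + (0:ℕ)) ^ m)⁻¹ := by
    have : (0:ℝ) < x + (0:ℕ) := by simpa using hx
    positivity
  calc (0:ℝ) < ((x + (0:ℕ)) ^ m)⁻¹ := h0
    _ ≤ pgP m x := Summable.le_tsum hs 0 fun j _ => by positivity

lemma hasDerivAt_pgP (m : ℕ) (hm : 2 ≤ m) {x : ℝ} (hx : 0 < x) :
    HasDerivAt (pgP m) (-(m:ℝ) * pgP (m+1) x) x := by
  set e : ℝ := min (x/2) 1 with he
  have he0 : 0 < e := lt_min (by linarith) one_pos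
  have he1 : e ≤ 1 := min_le_right _ _
  have hu : Summable (fun n : ℕ => ((m:ℝ) * (e ^ (m+1))⁻¹) * (((n:ℝ)+1)^2)⁻¹) :=
    summable_inv_sq.mul_left _
  have key := hasDerivAt_tsum_of_isPreconnected hu isOpen_Ioo
      (isPreconnected_Ioo (a := x/2) (b := x+1))
      (g := fun (n : ℕ) (y : ℝ) => ((y + n) ^ m)⁻¹)
      (g' := fun (n : ℕ) (y : ℝ) => -(m:ℝ) * (((y + n) ^ (m+1))⁻¹))
      (y₀ := x) (y := x) ?_ ?_ ?_ ?_ ?_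
  · have : (∑' n : ℕ, -(m:ℝ) * (((x + n) ^ (m+1))⁻¹)) = -(m:ℝ) * pgP (m+1) x := by
      rw [pgP, ← tsum_mul_left]
    rwa [this] at key
  · intro n y hy
    have hy0 : 0 < y + (n:ℝ) := by
      have : 0 < y := lt_trans (by linarith [hy.1]) hy.1
      positivity
    exact hasDerivAt_inv_pow_shift m (n:ℝ) (ne_of_gt hy0)
  · intro n y hy
    have hy0 : 0 < y := lt_trans (by linarith [hy.1]) hy.1
    have hey : e ≤ y := le_trans (min_le_left _ _) hy.1.le
    have hb := inv_pow_le (m+1) (by omega) he0 he1 hey n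
    rw [Real.norm_eq_abs, abs_mul, abs_neg, abs_of_nonneg (by positivity : (0:ℝ) ≤ (m:ℝ)),
      abs_of_nonneg (by positivity : (0:ℝ) ≤ ((y + (n:ℝ)) ^ (m+1))⁻¹)]
    calc (m:ℝ) * ((y + n) ^ (m+1))⁻¹ ≤ (m:ℝ) * ((e ^ (m+1))⁻¹ * (((n:ℝ)+1)^2)⁻¹) := by
          exact mul_le_mul_of_nonneg_left hb (by positivity)
      _ = ((m:ℝ) * (e ^ (m+1))⁻¹) * (((n:ℝ)+1)^2)⁻¹ := by ring
  · exact ⟨by linarith, by linarith⟩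
  · exact summable_pgP m hm hx
  · exact ⟨by linarith, by linarith⟩

/-- logarithm of Euler's Gamma sequence -/
def pgLG (n : ℕ) (x : ℝ) : ℝ :=
  x * Real.log n + Real.log (Nat.factorial n) - ∑ j ∈ Finset.range (n+1), Real.log (x + j)

/-- derivative of `pgLG n` -/
def pgdgs (n : ℕ) (x : ℝ) : ℝ := Real.log n - ∑ j ∈ Finset.range (n+1), (x + j)⁻¹

/-- harmonic sum minus log -/
def pgA (n : ℕ) : ℝ := (∑ j ∈ Finset.range (n+1), ((j:ℝ)+1)⁻¹) - Real.log n

noncomputable def pgc₀ : ℝ := -(⨅ n : ℕ, pgA (n+1))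

def pgJ (x : ℝ) : ℝ := ∑' j : ℕ, (((j:ℝ)+1)⁻¹ - (x + j)⁻¹)

/-- the digamma function (up to it being `deriv (log ∘ Γ)`) -/
noncomputable def pgD (x : ℝ) : ℝ := pgc₀ + pgJ x

lemma log_succ_div_lb (t : ℝ) (ht : 0 < t) :
    (t + 1)⁻¹ ≤ Real.log (t + 1) - Real.log t := by
  have h1 : Real.log (t+1) - Real.log t = Real.log ((t+1)/t) := by
    rw [Real.log_div (by linarith) (ne_of_gt ht)]
  rw [h1]
  rw [Real.le_log_iff_exp_le (by positivity)]
  have h2 := Real.add_one_le_exp (-(t+1)⁻¹)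
  have h3 : (0:ℝ) < t + 1 := by linarith
  have h4 : Real.exp (-(t+1)⁻¹) * Real.exp ((t+1)⁻¹) = 1 := by
    rw [← Real.exp_add]; simp
  have h5 : 0 < Real.exp (-(t+1)⁻¹) := Real.exp_pos _
  have h6 : 1 + -(t+1)⁻¹ ≤ Real.exp (-(t+1)⁻¹) := by linarith
  have h7 : 1 + -(t+1)⁻¹ = t / (t+1) := by field_simp; ring
  -- exp((t+1)⁻¹) = 1/exp(-(t+1)⁻¹) ≤ 1/(t/(t+1)) = (t+1)/t
  have h8 : Real.exp ((t+1)⁻¹) = (Real.exp (-(t+1)⁻¹))⁻¹ := by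
    rw [Real.exp_neg, inv_inv]
  rw [h8]
  rw [h7] at h6
  have h9 : (0:ℝ) < t / (t+1) := by positivity
  calc (Real.exp (-(t+1)⁻¹))⁻¹ ≤ (t / (t+1))⁻¹ := by
        exact inv_anti₀ h9 h6
    _ = (t+1)/t := by rw [inv_div]

lemma log_succ_div_ub (t : ℝ) (ht : 0 < t) :
    Real.log (t + 1) - Real.log t ≤ t⁻¹ := by
  have h1 : Real.log (t+1) - Real.log t = Real.log ((t+1)/t) := by
    rw [Real.log_div (by linarith) (ne_of_gt ht)]
  rw [h1]
  have h2 : (0:ℝ) < (t+1)/t := by positivity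
  have h3 := Real.log_le_sub_one_of_pos h2
  have h4 : (t+1)/t - 1 = t⁻¹ := by field_simp; ring
  linarith [h3, h4.le]

lemma pgA_antitone : Antitone (fun n : ℕ => pgA (n+1)) := by
  apply antitone_nat_of_succ_le
  intro n
  simp only [pgA]
  rw [show n+1+1+1 = (n+1+1)+1 from rfl, Finset.sum_range_succ (fun j => ((j:ℝ)+1)⁻¹) (n+1+1)]
  have key := log_succ_div_lb ((n:ℝ)+1) (by positivity)
  have h2 : (((n+1+1:ℕ):ℝ)+1)⁻¹ ≤ (((n:ℝ)+1)+1)⁻¹ := by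
    apply inv_anti₀ (by positivity)
    push_cast
    linarith
  have hc1 : ((n+1+1:ℕ):ℝ) = ((n:ℝ)+1)+1 := by push_cast; ring
  have hc2 : ((n+1:ℕ):ℝ) = (n:ℝ)+1 := by push_cast; ring
  rw [hc1, hc2]
  push_cast
  push_cast at key h2
  linarith

lemma pgA_nonneg (n : ℕ) : 0 ≤ pgA (n+1) := by
  have htel := Finset.sum_range_sub (fun j : ℕ => Real.log ((j:ℝ)+1)) (n+2)
  have hle : ∑ j ∈ Finset.range (n+2), (Real.log (((j+1:ℕ):ℝ)+1) - Real.log ((j:ℝ)+1))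
      ≤ ∑ j ∈ Finset.range (n+2), ((j:ℝ)+1)⁻¹ := by
    refine Finset.sum_le_sum fun j _ => ?_
    have := log_succ_div_ub ((j:ℝ)+1) (by positivity)
    push_cast
    push_cast at this
    linarith
  rw [htel] at hle
  simp only [Nat.cast_zero, zero_add, Real.log_one, sub_zero] at hle
  have hmono : Real.log ((n+1:ℕ):ℝ) ≤ Real.log (((n+2:ℕ):ℝ)+1) := by
    apply Real.log_le_log (by positivity)
    push_cast
    linarith
  simp only [pgA]
  push_cast at hle hmono ⊢
  linarith

lemma pgA_tendsto : Tendsto pgA atTop (𝓝 (-pgc₀)) := by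
  have hbdd : BddBelow (Set.range fun n : ℕ => pgA (n+1)) := by
    refine ⟨0, ?_⟩
    rintro y ⟨n, rfl⟩
    exact pgA_nonneg n
  have h1 : Tendsto (fun n : ℕ => pgA (n+1)) atTop (𝓝 (⨅ n : ℕ, pgA (n+1))) :=
    tendsto_atTop_ciInf pgA_antitone hbdd
  have h2 : -pgc₀ = ⨅ n : ℕ, pgA (n+1) := by rw [pgc₀, neg_neg]
  rw [h2]
  rwa [← tendsto_add_atTop_iff_nat 1]

lemma TUO_shift {F : ℕ → ℝ → ℝ} {f : ℝ → ℝ} {s : Set ℝ}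
    (h : TendstoUniformlyOn F f atTop s) : TendstoUniformlyOn (fun n => F (n+1)) f atTop s :=
  fun u hu => (tendsto_add_atTop_nat 1).eventually (h u hu)

lemma pgdgs_tuo {a b : ℝ} (ha : 0 < a) :
    TendstoUniformlyOn (fun n x => pgdgs n x) pgD atTop (Set.Ioo a b) := by
  set e : ℝ := min a 1 with he
  have he0 : 0 < e := lt_min ha one_pos
  have he1 : e ≤ 1 := min_le_right _ _
  have hsum : Summable (fun j : ℕ => ((|b|+1) * e⁻¹) * (((j:ℝ)+1)^2)⁻¹) :=
    summable_inv_sq.mul_left _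
  have hbnd : ∀ (j : ℕ), ∀ x ∈ Set.Ioo a b, ‖((j:ℝ)+1)⁻¹ - (x+j)⁻¹‖ ≤ ((|b|+1) * e⁻¹) * (((j:ℝ)+1)^2)⁻¹ := by
    intro j x hx
    have hxa : a < x := hx.1
    have hx0 : 0 < x := lt_trans ha hxa
    have hxj : (0:ℝ) < x + j := by positivity
    have hj1 : (0:ℝ) < (j:ℝ) + 1 := by positivity
    have heq : ((j:ℝ)+1)⁻¹ - (x+j)⁻¹ = (x - 1) / (((j:ℝ)+1) * (x+j)) := by
      field_simp
      ring
    rw [heq, norm_div, Real.norm_eq_abs, Real.norm_eq_abs]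
    have hnum : |x - 1| ≤ |b| + 1 := by
      rw [abs_le]
      constructor
      · have : (0:ℝ) ≤ |b| := abs_nonneg b
        linarith
      · have : b ≤ |b| := le_abs_self b
        linarith [hx.2]
    have hden : e * (((j:ℝ)+1)^2) ≤ ((j:ℝ)+1) * (x+j) := by
      have hex : e ≤ x := le_trans (min_le_left _ _) hxa.le
      have h2 : e * ((j:ℝ) + 1) ≤ x + j := by
        have : e * (j:ℝ) ≤ j := by
          have := Nat.cast_nonneg (α := ℝ) j
          nlinarith
        nlinarith
      calc e * (((j:ℝ)+1)^2) = ((j:ℝ)+1) * (e * ((j:ℝ)+1)) := by ring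
        _ ≤ ((j:ℝ)+1) * (x+j) := by nlinarith
    have habs : |((j:ℝ)+1) * (x+j)| = ((j:ℝ)+1) * (x+j) := abs_of_pos (by positivity)
    rw [habs]
    calc |x-1| / (((j:ℝ)+1) * (x+j)) ≤ (|b|+1) / (e * (((j:ℝ)+1)^2)) :=
          div_le_div₀ (by positivity) hnum (by positivity) hden
      _ = ((|b|+1) * e⁻¹) * (((j:ℝ)+1)^2)⁻¹ := by
          field_simp
  have hseries := tendstoUniformlyOn_tsum_nat hsum hbnd
  have hshift := TUO_shift hseries
  have hconst : TendstoUniformlyOn (fun (n : ℕ) (_ : ℝ) => -pgA n) (fun (_ : ℝ) => pgc₀) atTop (Set.Ioo a b) := by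
    apply Filter.Tendsto.tendstoUniformlyOn_const
    have := pgA_tendsto.neg
    rwa [neg_neg] at this
  have hadd := hconst.add hshift
  have hrepr : ∀ (n : ℕ), Set.EqOn (fun x : ℝ => -pgA n + ∑ j ∈ Finset.range (n+1), (((j:ℝ)+1)⁻¹ - (x+(j:ℝ))⁻¹))
      (fun x : ℝ => pgdgs n x) (Set.Ioo a b) := by
    intro n x _
    simp only [pgdgs, pgA, Finset.sum_sub_distrib]
    ring
  have : TendstoUniformlyOn (fun (n : ℕ) (x : ℝ) => -pgA n + ∑ j ∈ Finset.range (n+1), (((j:ℝ)+1)⁻¹ - (x+(j:ℝ))⁻¹))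
      (fun x : ℝ => pgc₀ + pgJ x) atTop (Set.Ioo a b) := hadd
  have hfinal := this.congr (Eventually.of_forall hrepr)
  exact hfinal

lemma pgLG_tendsto {x : ℝ} (hx : 0 < x) :
    Tendsto (fun n => pgLG n x) atTop (𝓝 (Real.log (Real.Gamma x))) := by
  have h1 := Real.GammaSeq_tendsto_Gamma x
  have h2 : ContinuousAt Real.log (Real.Gamma x) :=
    Real.continuousAt_log (Real.Gamma_pos_of_pos hx).ne'
  have h3 : Tendsto (fun n => Real.log (Real.GammaSeq x n)) atTop (𝓝 (Real.log (Real.Gamma x))) :=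
    h2.tendsto.comp h1
  refine h3.congr' ?_
  filter_upwards [eventually_ge_atTop 1] with n hn
  have hn0 : (0:ℝ) < (n:ℝ) := by exact_mod_cast hn
  have hprodpos : ∀ j ∈ Finset.range (n+1), x + (j:ℝ) ≠ 0 := by
    intro j _
    positivity
  have hprod : (0:ℝ) < ∏ j ∈ Finset.range (n+1), (x + (j:ℝ)) :=
    Finset.prod_pos fun j _ => by positivity
  rw [Real.GammaSeq, Real.log_div (by positivity) (ne_of_gt hprod),
    Real.log_mul (by positivity) (by positivity), Real.log_rpow hn0, Real.log_prod hprodpos]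
  rfl

lemma pgLG_hasDerivAt (n : ℕ) {x : ℝ} (hx : 0 < x) : HasDerivAt (pgLG n) (pgdgs n x) x := by
  have h1 : HasDerivAt (fun y : ℝ => y * Real.log n + Real.log (Nat.factorial n)) (Real.log n) x :=
    (hasDerivAt_mul_const _).add_const _
  have h2 : ∀ j ∈ Finset.range (n+1), HasDerivAt (fun y : ℝ => Real.log (y + j)) ((x+(j:ℝ))⁻¹) x := by
    intro j _
    have hxj : x + (j:ℝ) ≠ 0 := by positivity
    have := ((hasDerivAt_id x).add_const (j:ℝ)).log hxj
    simpa [one_div] using this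
  have h3 := h1.fun_sub (HasDerivAt.fun_sum h2)
  exact h3

lemma pgdgs_hasDerivAt (n : ℕ) {x : ℝ} (hx : 0 < x) :
    HasDerivAt (pgdgs n) (∑ j ∈ Finset.range (n+1), ((x+(j:ℝ))^2)⁻¹) x := by
  have h2 : ∀ j ∈ Finset.range (n+1), HasDerivAt (fun y : ℝ => (y + (j:ℝ))⁻¹)
      (-(((x+(j:ℝ))^2)⁻¹)) x := by
    intro j _
    have hxj : x + (j:ℝ) ≠ 0 := by positivity
    have := hasDerivAt_inv_pow_shift 1 (j:ℝ) hxj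
    simpa using this
  have h3 := (hasDerivAt_const x (Real.log n)).fun_sub (HasDerivAt.fun_sum h2)
  simp only [Finset.sum_neg_distrib, zero_sub, neg_neg] at h3
  exact h3

lemma pgp2_tuo {a b : ℝ} (ha : 0 < a) :
    TendstoUniformlyOn (fun n x => ∑ j ∈ Finset.range (n+1), ((x+(j:ℝ))^2)⁻¹)
      (pgP 2) atTop (Set.Ioo a b) := by
  set e : ℝ := min a 1 with he
  have he0 : 0 < e := lt_min ha one_pos
  have he1 : e ≤ 1 := min_le_right _ _
  have hsum : Summable (fun j : ℕ => (e^2)⁻¹ * (((j:ℝ)+1)^2)⁻¹) := summable_inv_sq.mul_left _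
  have hbnd : ∀ (j : ℕ), ∀ x ∈ Set.Ioo a b, ‖((x+(j:ℝ))^2)⁻¹‖ ≤ (e^2)⁻¹ * (((j:ℝ)+1)^2)⁻¹ := by
    intro j x hx
    have hx0 : 0 < x := lt_trans ha hx.1
    have hex : e ≤ x := le_trans (min_le_left _ _) hx.1.le
    rw [Real.norm_eq_abs, abs_of_nonneg (by positivity)]
    exact inv_pow_le 2 le_rfl he0 he1 hex j
  exact TUO_shift (tendstoUniformlyOn_tsum_nat hsum hbnd)

lemma logGamma_hasDerivAt {x : ℝ} (hx : 0 < x) :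
    HasDerivAt (fun y => Real.log (Real.Gamma y)) (pgD x) x := by
  refine hasDerivAt_of_tendstoUniformlyOn (s := Set.Ioo (x/2) (x+1)) (f := pgLG)
    (f' := fun n x => pgdgs n x) isOpen_Ioo (pgdgs_tuo (by linarith)) ?_ ?_ ⟨by linarith, by linarith⟩
  · filter_upwards with n y hy
    exact pgLG_hasDerivAt n (lt_trans (by linarith [hy.1]) hy.1)
  · intro y hy
    exact pgLG_tendsto (lt_trans (by linarith [hy.1]) hy.1)

lemma pgD_hasDerivAt {x : ℝ} (hx : 0 < x) : HasDerivAt pgD (pgP 2 x) x := by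
  refine hasDerivAt_of_tendstoUniformlyOn (s := Set.Ioo (x/2) (x+1)) (f := pgdgs)
    (f' := fun n x => ∑ j ∈ Finset.range (n+1), ((x+(j:ℝ))^2)⁻¹) (g := pgD) isOpen_Ioo
    (pgp2_tuo (by linarith)) ?_ ?_ ⟨by linarith, by linarith⟩
  · filter_upwards with n y hy
    exact pgdgs_hasDerivAt n (lt_trans (by linarith [hy.1]) hy.1)
  · intro y hy
    exact (pgdgs_tuo (by linarith : (0:ℝ) < x/2)).tendsto_at hy

lemma polygamma_eq (i : ℕ) (hi : 1 ≤ i) : ∀ x : ℝ, 0 < x →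
    polygamma i x = (-1)^(i+1) * (Nat.factorial i : ℝ) * pgP (i+1) x := by
  induction i, hi using Nat.le_induction with
  | base =>
    intro x hx
    show iteratedDeriv 2 (fun x => Real.log (Real.Gamma x)) x = _
    rw [show (2:ℕ) = 1 + 1 from rfl, iteratedDeriv_succ, iteratedDeriv_one]
    have hev : deriv (fun x => Real.log (Real.Gamma x)) =ᶠ[𝓝 x] pgD := by
      filter_upwards [isOpen_Ioi.mem_nhds hx] with y hy
      exact (logGamma_hasDerivAt hy).deriv
    rw [hev.deriv_eq, (pgD_hasDerivAt hx).deriv]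
    norm_num
  | succ i hi IH =>
    intro x hx
    show iteratedDeriv (i + 1 + 1) (fun x => Real.log (Real.Gamma x)) x = _
    rw [iteratedDeriv_succ]
    have hev : iteratedDeriv (i+1) (fun x => Real.log (Real.Gamma x)) =ᶠ[𝓝 x]
        (fun y => (-1)^(i+1) * (Nat.factorial i : ℝ) * pgP (i+1) y) := by
      filter_upwards [isOpen_Ioi.mem_nhds hx] with y hy
      exact IH y hy
    rw [hev.deriv_eq]
    have hD := (hasDerivAt_pgP (i+1) (by omega) hx).const_mul ((-1)^(i+1) * (Nat.factorial i : ℝ))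
    rw [hD.deriv]
    have hfact : (Nat.factorial (i+1) : ℝ) = ((i:ℝ)+1) * (Nat.factorial i : ℝ) := by
      rw [Nat.factorial_succ]; push_cast; ring
    rw [hfact]
    push_cast
    ring

lemma abs_polygamma (i : ℕ) (hi : 1 ≤ i) {x : ℝ} (hx : 0 < x) :
    |polygamma i x| = (Nat.factorial i : ℝ) * pgP (i+1) x := by
  rw [polygamma_eq i hi x hx, abs_mul, abs_mul, abs_pow, abs_neg, abs_one, one_pow, one_mul,
    abs_of_nonneg (by positivity : (0:ℝ) ≤ (Nat.factorial i : ℝ)),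
    abs_of_nonneg (pgP_pos (i+1) (by omega) hx).le]

lemma pgH_zero_eq (m n : ℕ) (x : ℝ) : pgH m n 0 x = (x * (x + (n:ℝ)) ^ m)⁻¹ := by
  simp [pgH, pgc_zero, div_eq_mul_inv, pow_one]

lemma summable_pgH1 (m k : ℕ) (hm : 2 ≤ m) {x : ℝ} (hx : 0 < x) :
    Summable (fun n : ℕ => pgH m n k x) := by
  have := summable_pgH m k 2 le_rfl hm (fun _ => 1) (fun _ => zero_le_one) (fun n => by simp) hx
  simpa using this

lemma summable_pgH2 (m k : ℕ) (hm : 3 ≤ m) {x : ℝ} (hx : 0 < x) :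
    Summable (fun n : ℕ => (n:ℝ) * pgH m n k x) := by
  refine summable_pgH m k 3 (by norm_num) hm (fun n => (n:ℝ)) (fun n => n.cast_nonneg)
    (fun n => ?_) hx
  simp only [show 3 - 2 = 1 from rfl, pow_one]
  linarith

lemma hasDerivAt_S1 (m k : ℕ) (hm : 2 ≤ m) {x : ℝ} (hx : 0 < x) :
    HasDerivAt (fun y => ∑' n : ℕ, pgH m n k y) (-∑' n : ℕ, pgH m n (k+1) x) x := by
  have := hasDerivAt_tsum_pgH m k 2 le_rfl hm (fun _ => 1) (fun _ => zero_le_one)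
    (fun n => by simp) hx
  simpa using this

lemma hasDerivAt_S2 (m k : ℕ) (hm : 3 ≤ m) {x : ℝ} (hx : 0 < x) :
    HasDerivAt (fun y => ∑' n : ℕ, (n:ℝ) * pgH m n k y) (-∑' n : ℕ, (n:ℝ) * pgH m n (k+1) x) x := by
  refine hasDerivAt_tsum_pgH m k 3 (by norm_num) hm (fun n => (n:ℝ)) (fun n => n.cast_nonneg)
    (fun n => ?_) hx
  simp only [show 3 - 2 = 1 from rfl, pow_one]
  linarith

lemma F_eq (i : ℕ) (hi : 1 ≤ i) (α : ℝ) {x : ℝ} (hx : 0 < x) :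
    α / x * |polygamma i x| - |polygamma (i+1) x|
      = (α - ((i:ℝ)+1)) * (Nat.factorial i : ℝ) * ∑' n : ℕ, pgH (i+1) n 0 x
        + (Nat.factorial (i+1) : ℝ) * ∑' n : ℕ, (n:ℝ) * pgH (i+2) n 0 x := by
  have hx0 : x ≠ 0 := ne_of_gt hx
  rw [abs_polygamma i hi hx, abs_polygamma (i+1) (by omega) hx]
  have hs1 : Summable (fun n : ℕ => ((x + (n:ℝ)) ^ (i+1))⁻¹) := summable_pgP (i+1) (by omega) hx
  have hs2 : Summable (fun n : ℕ => ((x + (n:ℝ)) ^ (i+2))⁻¹) := summable_pgP (i+2) (by omega) hx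
  have hL1 : α / x * ((Nat.factorial i : ℝ) * pgP (i+1) x)
      = ∑' n : ℕ, (α * (Nat.factorial i : ℝ) / x) * ((x + (n:ℝ)) ^ (i+1))⁻¹ := by
    rw [pgP, tsum_mul_left]
    ring
  have hL2 : (Nat.factorial (i+1) : ℝ) * pgP (i+2) x
      = ∑' n : ℕ, (Nat.factorial (i+1) : ℝ) * ((x + (n:ℝ)) ^ (i+2))⁻¹ := by
    rw [pgP, tsum_mul_left]
  rw [hL1, hL2, ← Summable.tsum_sub (hs1.mul_left _) (hs2.mul_left _)]
  have hR1 : (α - ((i:ℝ)+1)) * (Nat.factorial i : ℝ) * ∑' n : ℕ, pgH (i+1) n 0 x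
      = ∑' n : ℕ, ((α - ((i:ℝ)+1)) * (Nat.factorial i : ℝ)) * pgH (i+1) n 0 x := by
    rw [tsum_mul_left]
  have hR2 : (Nat.factorial (i+1) : ℝ) * ∑' n : ℕ, (n:ℝ) * pgH (i+2) n 0 x
      = ∑' n : ℕ, (Nat.factorial (i+1) : ℝ) * ((n:ℝ) * pgH (i+2) n 0 x) := by
    rw [tsum_mul_left]
  rw [hR1, hR2, ← Summable.tsum_add ((summable_pgH1 (i+1) 0 (by omega) hx).mul_left _)
      ((summable_pgH2 (i+2) 0 (by omega) hx).mul_left _)]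
  refine tsum_congr fun n => ?_
  rw [pgH_zero_eq, pgH_zero_eq]
  have hxn : x + (n:ℝ) ≠ 0 := by positivity
  have hfact : (Nat.factorial (i+1) : ℝ) = ((i:ℝ)+1) * (Nat.factorial i : ℝ) := by
    rw [Nat.factorial_succ]; push_cast; ring
  have hpow : (x + (n:ℝ))^(i+2) = (x + (n:ℝ))^(i+1) * (x + (n:ℝ)) := by ring
  rw [hfact, hpow]
  have h1 : (x + (n:ℝ))^(i+1) ≠ 0 := pow_ne_zero _ hxn
  field_simp
  ring

lemma iter_formula (i : ℕ) (hi : 1 ≤ i) (α : ℝ) (k : ℕ) :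
    ∀ x : ℝ, 0 < x →
      iteratedDeriv k (fun x : ℝ => α / x * |polygamma i x| - |polygamma (i + 1) x|) x
        = (-1)^k * ((α - ((i:ℝ)+1)) * (Nat.factorial i : ℝ) * ∑' n : ℕ, pgH (i+1) n k x
            + (Nat.factorial (i+1) : ℝ) * ∑' n : ℕ, (n:ℝ) * pgH (i+2) n k x) := by
  induction k with
  | zero =>
    intro x hx
    rw [iteratedDeriv_zero]
    simpa using F_eq i hi α hx
  | succ k IH =>
    intro x hx
    rw [iteratedDeriv_succ]
    have hev : iteratedDeriv k (fun x : ℝ => α / x * |polygamma i x| - |polygamma (i + 1) x|)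
        =ᶠ[𝓝 x] (fun y => (-1)^k * ((α - ((i:ℝ)+1)) * (Nat.factorial i : ℝ) * ∑' n : ℕ, pgH (i+1) n k y
            + (Nat.factorial (i+1) : ℝ) * ∑' n : ℕ, (n:ℝ) * pgH (i+2) n k y)) := by
      filter_upwards [isOpen_Ioi.mem_nhds hx] with y hy
      exact IH y hy
    rw [hev.deriv_eq]
    have h1 := (hasDerivAt_S1 (i+1) k (by omega) hx).const_mul ((α - ((i:ℝ)+1)) * (Nat.factorial i : ℝ))
    have h2 := (hasDerivAt_S2 (i+2) k (by omega) hx).const_mul ((Nat.factorial (i+1) : ℝ))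
    have h3 := (h1.fun_add h2).const_mul ((-1:ℝ)^k)
    rw [h3.deriv]
    ring
lemma CM_forward (i : ℕ) (hi : 1 ≤ i) (α : ℝ)
    (h : ∀ x : ℝ, 0 < x → 0 ≤ α / x * |polygamma i x| - |polygamma (i + 1) x|) :
    (i:ℝ) + 1 ≤ α := by
  obtain ⟨C, hC⟩ : ∃ C : ℝ, C = ∑' n : ℕ, (((n:ℝ)+1)^2)⁻¹ := ⟨_, rfl⟩
  have hC0 : 0 ≤ C := by
    rw [hC]
    exact tsum_nonneg fun n => by positivity
  have key : ∀ x : ℝ, 0 < x → x < 1 → (i:ℝ) + 1 ≤ α * (1 + C * x^(i+1)) := by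
    intro x hx hx1
    have hx0 : x ≠ 0 := ne_of_gt hx
    have hF := h x hx
    rw [abs_polygamma i hi hx, abs_polygamma (i+1) (by omega) hx] at hF
    have hP1 : 0 < pgP (i+1+1) x := pgP_pos _ (by omega) hx
    have hP0 : 0 < pgP (i+1) x := pgP_pos _ (by omega) hx
    have hfa : (0:ℝ) < (Nat.factorial i : ℝ) := by positivity
    have hfa1 : (0:ℝ) < (Nat.factorial (i+1) : ℝ) := by positivity
    have h1 : (Nat.factorial (i+1) : ℝ) * pgP (i+1+1) x ≤ α / x * ((Nat.factorial i : ℝ) * pgP (i+1) x) := by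
      linarith
    have hα : 0 < α := by
      by_contra hneg
      push_neg at hneg
      have hle : α / x * ((Nat.factorial i : ℝ) * pgP (i+1) x) ≤ 0 := by
        apply mul_nonpos_of_nonpos_of_nonneg
        · exact div_nonpos_of_nonpos_of_nonneg hneg hx.le
        · positivity
      nlinarith
    -- lower bound for pgP (i+2)
    have hs2 : Summable (fun n : ℕ => ((x + (n:ℝ)) ^ (i+2))⁻¹) := summable_pgP (i+2) (by omega) hx
    have lb : (x^(i+2))⁻¹ ≤ pgP (i+1+1) x := by
      have h0 := Summable.le_tsum hs2 0 (fun j _ => by positivity)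
      simpa [pgP] using h0
    -- upper bound for pgP (i+1)
    have hs1 : Summable (fun n : ℕ => ((x + (n:ℝ)) ^ (i+1))⁻¹) := summable_pgP (i+1) (by omega) hx
    have ub : pgP (i+1) x ≤ (x^(i+1))⁻¹ + C := by
      rw [pgP, Summable.tsum_eq_zero_add hs1]
      have hterm0 : ((x + ((0:ℕ):ℝ)) ^ (i+1))⁻¹ = (x^(i+1))⁻¹ := by norm_num
      rw [hterm0]
      have htail : ∑' n : ℕ, ((x + ((n+1:ℕ):ℝ)) ^ (i+1))⁻¹ ≤ C := by
        rw [hC]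
        refine Summable.tsum_le_tsum (fun n => ?_)
          ((summable_nat_add_iff (f := fun n : ℕ => ((x + (n:ℝ)) ^ (i+1))⁻¹) 1).mpr hs1)
          summable_inv_sq
        have hb1 : ((n:ℝ)+1)^2 ≤ (x + ((n+1:ℕ):ℝ))^(i+1) := by
          have e1 : ((n:ℝ)+1)^2 ≤ ((n:ℝ)+1)^(i+1) := pow_le_pow_right₀ (by linarith [n.cast_nonneg (α := ℝ)]) (by omega)
          have e2 : ((n:ℝ)+1)^(i+1) ≤ (x + ((n+1:ℕ):ℝ))^(i+1) := by
            apply pow_le_pow_left₀ (by positivity)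
            push_cast
            linarith
          linarith
        have hpos : (0:ℝ) < ((n:ℝ)+1)^2 := by positivity
        exact inv_anti₀ hpos hb1
      linarith
    have h3 : α / x * ((Nat.factorial i : ℝ) * pgP (i+1) x)
        ≤ α / x * ((Nat.factorial i : ℝ) * ((x^(i+1))⁻¹ + C)) := by
      apply mul_le_mul_of_nonneg_left _ (by positivity)
      exact mul_le_mul_of_nonneg_left ub hfa.le
    have h4 : (Nat.factorial (i+1) : ℝ) * (x^(i+2))⁻¹ ≤ α / x * ((Nat.factorial i : ℝ) * ((x^(i+1))⁻¹ + C)) := by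
      calc (Nat.factorial (i+1) : ℝ) * (x^(i+2))⁻¹ ≤ (Nat.factorial (i+1) : ℝ) * pgP (i+1+1) x :=
            mul_le_mul_of_nonneg_left lb hfa1.le
        _ ≤ _ := le_trans h1 h3
    have heq : α / x * ((Nat.factorial i : ℝ) * ((x^(i+1))⁻¹ + C))
        = (α * (1 + C * x^(i+1)) * (Nat.factorial i : ℝ)) * (x^(i+2))⁻¹ := by
      have hpne : x^(i+1) ≠ 0 := pow_ne_zero _ hx0
      have hpne2 : x^(i+2) ≠ 0 := pow_ne_zero _ hx0
      field_simp
      ring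
    rw [heq] at h4
    have h5 : (Nat.factorial (i+1) : ℝ) ≤ α * (1 + C * x^(i+1)) * (Nat.factorial i : ℝ) := by
      have hinv : (0:ℝ) < (x^(i+2))⁻¹ := by positivity
      exact le_of_mul_le_mul_right (by linarith [h4]) hinv
    have hfact : (Nat.factorial (i+1) : ℝ) = ((i:ℝ)+1) * (Nat.factorial i : ℝ) := by
      rw [Nat.factorial_succ]; push_cast; ring
    rw [hfact] at h5
    exact le_of_mul_le_mul_right (by linarith) hfa
  have hlim : Tendsto (fun x : ℝ => α * (1 + C * x^(i+1))) (𝓝[>] (0:ℝ)) (𝓝 α) := by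
    have hcont : Continuous (fun x : ℝ => α * (1 + C * x^(i+1))) := by continuity
    have h0 : α * (1 + C * (0:ℝ)^(i+1)) = α := by
      rw [zero_pow (Nat.succ_ne_zero i)]
      ring
    have := hcont.tendsto 0
    simp only [h0] at this
    exact this.mono_left nhdsWithin_le_nhds
  refine ge_of_tendsto hlim ?_
  filter_upwards [Ioo_mem_nhdsGT_of_mem (Set.mem_Ico.mpr ⟨le_refl (0:ℝ), one_pos⟩)] with x hx
  exact key x hx.1 hx.2

theorem stmt_15 (i : ℕ) (hi : 1 ≤ i) (α : ℝ) :
    CompletelyMonotonicOn (fun x : ℝ => α / x * |polygamma i x| - |polygamma (i + 1) x|) ↔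
      (i : ℝ) + 1 ≤ α := by
  constructor
  · intro h
    apply CM_forward i hi α
    intro x hx
    have h0 := h 0 x hx
    simpa [iteratedDeriv_zero] using h0
  · intro hα k x hx
    rw [iter_formula i hi α k x hx]
    have hsq : (-1:ℝ)^k * (-1)^k = 1 := by
      rw [← pow_add, ← two_mul, pow_mul]
      norm_num
    rw [← mul_assoc, hsq, one_mul]
    have t1 : 0 ≤ ∑' n : ℕ, pgH (i+1) n k x := tsum_nonneg fun n => pgH_nonneg _ _ _ hx
    have t2 : 0 ≤ ∑' n : ℕ, (n:ℝ) * pgH (i+2) n k x :=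
      tsum_nonneg fun n => mul_nonneg n.cast_nonneg (pgH_nonneg _ _ _ hx)
    have hα' : 0 ≤ α - ((i:ℝ)+1) := by linarith
    have hf1 : (0:ℝ) ≤ (Nat.factorial i : ℝ) := by positivity
    have hf2 : (0:ℝ) ≤ (Nat.factorial (i+1) : ℝ) := by positivity
    exact add_nonneg (mul_nonneg (mul_nonneg hα' hf1) t1) (mul_nonneg hf2 t2)


end PGproof
end

section
/- For every real β ≥ 1/2 and α ≥ 1 (with i a positive integer, α ≥ i, here stated for general i), the function t ↦ t e^t/(e^t - 1) + (β - 1) t + α - i - 1 is strictly increasing and positive on (0, ∞) whenever α ≥ i and β ≥ 1/2. -/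
open Real Set

/-- auxiliary: `t * exp t + t + 2 - 2 * exp t` is positive for `t > 0`,
i.e. `2 * (exp t - 1) < t * (exp t + 1)`. -/
lemma aux_two_mul_lt (t : ℝ) (ht : 0 < t) :
    2 * (Real.exp t - 1) < t * (Real.exp t + 1) := by
  have hder : ∀ x : ℝ, HasDerivAt (fun s : ℝ => s * Real.exp s + s + 2 - 2 * Real.exp s)
      ((1 * Real.exp x + x * Real.exp x) + 1 - 2 * Real.exp x) x := by
    intro x
    have h1 : HasDerivAt (fun s : ℝ => s * Real.exp s) (1 * Real.exp x + x * Real.exp x) x :=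
      (hasDerivAt_id x).mul (Real.hasDerivAt_exp x)
    have h2 := ((h1.add (hasDerivAt_id x)).add_const 2).sub ((Real.hasDerivAt_exp x).const_mul 2)
    exact h2
  have hmono : StrictMonoOn (fun s : ℝ => s * Real.exp s + s + 2 - 2 * Real.exp s) (Set.Ici 0) := by
    apply strictMonoOn_of_deriv_pos (convex_Ici 0)
    · exact (Continuous.continuousOn (by continuity))
    · intro x hx
      rw [interior_Ici] at hx
      rw [(hder x).deriv]
      have h3 : (-x) + 1 < Real.exp (-x) := Real.add_one_lt_exp (neg_ne_zero.mpr (ne_of_gt hx))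
      have h4 : Real.exp (-x) = (Real.exp x)⁻¹ := Real.exp_neg x
      have h5 : (0:ℝ) < Real.exp x := Real.exp_pos x
      have h6 : Real.exp x * (Real.exp x)⁻¹ = 1 := mul_inv_cancel₀ (ne_of_gt h5)
      nlinarith [mul_pos h5 (show (0:ℝ) < Real.exp (-x) - (1 - x) by linarith)]
  have h0 := hmono (Set.self_mem_Ici) (Set.mem_Ici.mpr (le_of_lt ht)) ht
  simp only [Real.exp_zero] at h0
  nlinarith [h0]

lemma hasDeriv_main (β α : ℝ) (i : ℕ) (t : ℝ) (ht : 0 < t) :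
    HasDerivAt (fun t : ℝ => t * Real.exp t / (Real.exp t - 1) + (β - 1) * t + α - i - 1)
      (((1 * Real.exp t + t * Real.exp t) * (Real.exp t - 1) - t * Real.exp t * Real.exp t) /
        (Real.exp t - 1) ^ 2 + (β - 1)) t := by
  have hE : 1 < Real.exp t := by
    have := Real.exp_lt_exp.mpr ht
    simpa using this
  have hne : Real.exp t - 1 ≠ 0 := by linarith
  have h1 : HasDerivAt (fun s : ℝ => s * Real.exp s) (1 * Real.exp t + t * Real.exp t) t :=
    (hasDerivAt_id t).mul (Real.hasDerivAt_exp t)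
  have h2 : HasDerivAt (fun s : ℝ => Real.exp s - 1) (Real.exp t) t :=
    (Real.hasDerivAt_exp t).sub_const 1
  have h3 := h1.div h2 hne
  have h4 : HasDerivAt (fun s : ℝ => (β - 1) * s) ((β - 1) * 1) t :=
    (hasDerivAt_id t).const_mul (β - 1)
  have h5 := (((h3.add h4).add_const α).sub_const (i : ℝ)).sub_const 1
  refine h5.congr_deriv ?_
  ring

theorem stmt_19 (i : ℕ) (hi : 1 ≤ i) (α β : ℝ) (hα : (i : ℝ) ≤ α) (hβ : 1 / 2 ≤ β) :
    StrictMonoOn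
      (fun t : ℝ => t * Real.exp t / (Real.exp t - 1) + (β - 1) * t + α - i - 1)
      (Set.Ioi 0) ∧
    ∀ t : ℝ, 0 < t →
      0 < t * Real.exp t / (Real.exp t - 1) + (β - 1) * t + α - i - 1 := by
  constructor
  · apply strictMonoOn_of_deriv_pos (convex_Ioi 0)
    · intro t ht
      exact (hasDeriv_main β α i t ht).continuousAt.continuousWithinAt
    · intro t ht
      rw [interior_Ioi] at ht
      rw [(hasDeriv_main β α i t ht).deriv]
      have hE : 1 < Real.exp t := by
        have := Real.exp_lt_exp.mpr ht
        simpa using this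
      have hden : (0:ℝ) < (Real.exp t - 1) ^ 2 := by nlinarith
      have hsinh := Real.self_lt_sinh_iff.mpr ht
      rw [Real.sinh_eq] at hsinh
      have h4 : Real.exp (-t) = (Real.exp t)⁻¹ := Real.exp_neg t
      have h5 : (0:ℝ) < Real.exp t := Real.exp_pos t
      have h6 : Real.exp t * (Real.exp t)⁻¹ = 1 := mul_inv_cancel₀ (ne_of_gt h5)
      -- key: 2 * numerator > (exp t - 1)^2
      have key : (Real.exp t - 1) ^ 2 / 2 <
          (1 * Real.exp t + t * Real.exp t) * (Real.exp t - 1) - t * Real.exp t * Real.exp t := by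
        nlinarith [mul_pos h5 (show (0:ℝ) < Real.exp t - Real.exp (-t) - 2 * t by
          rw [h4] at hsinh ⊢; linarith)]
      have hdiv : (1:ℝ) / 2 <
          ((1 * Real.exp t + t * Real.exp t) * (Real.exp t - 1) - t * Real.exp t * Real.exp t) /
            (Real.exp t - 1) ^ 2 := by
        rw [lt_div_iff₀ hden]
        nlinarith
      linarith
  · intro t ht
    have hE : 1 < Real.exp t := by
      have := Real.exp_lt_exp.mpr ht
      simpa using this
    have hden : (0:ℝ) < Real.exp t - 1 := by linarith
    have key := aux_two_mul_lt t ht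
    have h2 : (1 + t / 2) < t * Real.exp t / (Real.exp t - 1) := by
      rw [lt_div_iff₀ hden]
      nlinarith
    nlinarith
end
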